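/- arXiv:1802.08811 — 3 statements merged into one kernel-verified Lean document; each statement's English description precedes it below -/
import Mathlib

section
/- Let n ≥ 3 and let k be a unit modulo n of multiplicative order α ≥ 2, and assume wt(n,k;α) < ⌊n/2⌋ (so every minimal prime sequence realizing wt(n,k;α) has length at least 2, and hence has a well-defined positive degree and codegree). Let i be a minimal prime sequence realizing wt(n,k;α) whose degree is largest among all minimal prime sequences realizing wt(n,k;α), and let i′ be a minimal prime sequence realizing wt(n,k;α) whose codegree is smallest among all such sequences. Then deg(i) + codeg(i′) = α. -/
/-!
Exponents of `k` are read modulo its order `α`, so a sequence becomes a finset of `ZMod α`.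
Since `k ^ α = 1`, multiplying every `k ^ iⱼ` by `k ^ c` turns `Ω(i, λ)` into a translate of
itself, so the finsets realizing `wt(n,k;α)` form a translation-invariant, upward closed family,
and `wt(n,k;α) < ⌊n/2⌋` forces each member to have at least two elements.

For such a family and a generator `g`, take a member `M` of least cardinality and two of its
elements `y` and `y + d • g`, and translate so that `y + d • g` sits at `g`. If the translate
contains `0`, it is a minimal member containing `0` and `g`. Otherwise a minimal member containing
`0` inside `insert 0 M` either contains `g`, or by cardinality it is `M` with `g` moved to `0`: a
member of least cardinality with two elements at distance `d - 1`. Induct on `d`.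

With `g = 1` and `g = -1` this gives minimal prime sequences of codegree `1` and of degree `α - 1`,
so the extremal sequences have `deg i = α - 1` and `codeg i' = 1`.
-/

/-- The set `Ω(i, λ) = { b₁k^{i₁} + ⋯ + b_r k^{i_r} mod n : |b_j| ≤ λ_j }` in `ℤ/nℤ`. -/
def OmegaSet (n : ℕ) (k : (ZMod n)ˣ) {r : ℕ} (i : Fin r → ℕ) (lam : Fin r → ℕ) :
    Set (ZMod n) :=
  { x | ∃ b : Fin r → ℤ, (∀ j, |b j| ≤ (lam j : ℤ)) ∧
      x = ∑ j, (b j : ZMod n) * ((k ^ i j : (ZMod n)ˣ) : ZMod n) }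

/-- A `sequence`: a strictly decreasing tuple `α−1 ≥ i₁ > i₂ > ⋯ > i_r ≥ 0`. -/
def IsSeq (α : ℕ) {r : ℕ} (i : Fin r → ℕ) : Prop :=
  (∀ j, i j ≤ α - 1) ∧ StrictAnti i

/-- `wt(n, k; i)`: the minimal total weight `λ₁ + ⋯ + λ_r` over tuples `λ`
with `Ω(i,λ) = ℤ/nℤ`. -/
noncomputable def wtSeq (n : ℕ) (k : (ZMod n)ˣ) {r : ℕ} (i : Fin r → ℕ) : ℕ :=
  sInf { s | ∃ lam : Fin r → ℕ, OmegaSet n k i lam = Set.univ ∧ ∑ j, lam j = s }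

/-- The maximal sequence `Δ : α−1 > α−2 > ⋯ > 1 > 0`. -/
def DeltaSeq (α : ℕ) : Fin α → ℕ := fun j => α - 1 - (j : ℕ)

/-- `wt(n, k; α) := wt(n, k; Δ)`. -/
noncomputable def wtAlpha (n : ℕ) (k : (ZMod n)ˣ) (α : ℕ) : ℕ :=
  wtSeq n k (DeltaSeq α)

/-- The degree of a sequence: its largest entry. -/
noncomputable def degSeq {r : ℕ} (i : Fin r → ℕ) : ℕ := sSup (Set.range i)

/-- The codegree of a sequence: its smallest nonzero entry. -/
noncomputable def codegSeq {r : ℕ} (i : Fin r → ℕ) : ℕ :=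
  sInf { v | v ∈ Set.range i ∧ v ≠ 0 }

/-- A minimal prime sequence realizing `wt(n,k;α)`: a reduced sequence (i.e. one
containing `0`) of weight `wt(n,k;α)` such that no proper reduced subsequence
has weight `wt(n,k;α)`. -/
def IsMinimalPrimeSeq (n : ℕ) (k : (ZMod n)ˣ) (α : ℕ) {r : ℕ} (i : Fin r → ℕ) : Prop :=
  IsSeq α i ∧ 0 ∈ Set.range i ∧ wtSeq n k i = wtAlpha n k α ∧
    ∀ (q : ℕ) (i₀ : Fin q → ℕ), IsSeq α i₀ → 0 ∈ Set.range i₀ →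
      Set.range i₀ ⊆ Set.range i → Set.range i₀ ≠ Set.range i →
      wtSeq n k i₀ ≠ wtAlpha n k α

/-- `deg(n,k;α)`: the smallest degree of a minimal prime sequence realizing `wt(n,k;α)`. -/
noncomputable def degNK (n : ℕ) (k : (ZMod n)ˣ) (α : ℕ) : ℕ :=
  sInf { d | ∃ (r : ℕ) (i : Fin r → ℕ), IsMinimalPrimeSeq n k α i ∧ degSeq i = d }

open Pointwise

theorem minimal_zero_mem_of_card_le {G : Type*} [Zero G] {P : Finset G → Prop} {S : Finset G}
    (hS : P S) (hmin : ∀ T, P T → S.card ≤ T.card) (h0 : 0 ∈ S) :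
    Minimal (fun T => P T ∧ 0 ∈ T) S :=
  ⟨⟨hS, h0⟩, fun T hT hTS => (Finset.eq_of_subset_of_card_le hTS (hmin T hT.1)).ge⟩

section Translation

variable {G : Type*} [AddCommGroup G] [DecidableEq G] {P : Finset G → Prop}

theorem exists_mem_minimal_or_insert_zero_erase (hmono : ∀ ⦃S T⦄, P S → S ⊆ T → P T)
    {M : Finset G} (hM : P M) (hmin : ∀ T, P T → M.card ≤ T.card) {g : G} (hg : g ∈ M)
    (h0 : 0 ∉ M) :
    (∃ S, g ∈ S ∧ Minimal (fun T => P T ∧ 0 ∈ T) S) ∨ P (insert 0 (M.erase g)) := by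
  obtain ⟨U, hUV, hU⟩ := exists_minimal_le_of_wellFoundedLT (fun T => P T ∧ 0 ∈ T)
    (insert 0 M) ⟨hmono hM (Finset.subset_insert 0 M), Finset.mem_insert_self 0 M⟩
  by_cases hgU : g ∈ U
  · exact .inl ⟨U, hgU, hU⟩
  · have hg0 : g ≠ 0 := fun h => h0 (h ▸ hg)
    have hUsub : U ⊆ insert 0 (M.erase g) := by
      rw [← Finset.erase_insert_of_ne hg0.symm]
      exact Finset.subset_erase.2 ⟨hUV, hgU⟩
    have hcard : (insert 0 (M.erase g)).card ≤ U.card := by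
      rw [Finset.card_insert_of_notMem (fun h => h0 (Finset.mem_of_mem_erase h)),
        Finset.card_erase_add_one hg]
      exact hmin U hU.1.1
    exact .inr (Finset.eq_of_subset_of_card_le hUsub hcard ▸ hU.1.1)

variable (hmono : ∀ ⦃S T⦄, P S → S ⊆ T → P T) (htrans : ∀ (c : G) ⦃S⦄, P S → P (c +ᵥ S))
include hmono htrans

theorem exists_mem_minimal_of_add_nsmul_mem (g : G) (d : ℕ) {M : Finset G} (hM : P M)
    (hmin : ∀ T, P T → M.card ≤ T.card) {y : G} (hy : y ∈ M) (hyd : y + (d + 1) • g ∈ M)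
    (hd : (d + 1) • g ≠ 0) : ∃ S, g ∈ S ∧ Minimal (fun T => P T ∧ 0 ∈ T) S := by
  induction d generalizing M y with
  | zero =>
    have hmin' (c : G) : ∀ T, P T → (c +ᵥ M).card ≤ T.card :=
      Finset.card_vadd_finset c M ▸ hmin
    refine ⟨-y +ᵥ M, ?_, minimal_zero_mem_of_card_le (htrans _ hM) (hmin' _) ?_⟩
    · convert Finset.vadd_mem_vadd_finset (a := -y) hyd using 1
      simp
    · convert Finset.vadd_mem_vadd_finset (a := -y) hy using 1
      simp
  | succ d ih =>
    have hmin' (c : G) : ∀ T, P T → (c +ᵥ M).card ≤ T.card :=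
      Finset.card_vadd_finset c M ▸ hmin
    set M' := -(y + (d + 1) • g) +ᵥ M
    have hgM' : g ∈ M' := by
      convert Finset.vadd_mem_vadd_finset (a := -(y + (d + 1) • g)) hyd using 1
      rw [vadd_eq_add]; module
    have hyM' : -((d + 1) • g) ∈ M' := by
      convert Finset.vadd_mem_vadd_finset (a := -(y + (d + 1) • g)) hy using 1
      rw [vadd_eq_add]; abel
    by_cases h0 : 0 ∈ M'
    · exact ⟨M', hgM', minimal_zero_mem_of_card_le (htrans _ hM) (hmin' _) h0⟩
    rcases exists_mem_minimal_or_insert_zero_erase hmono (htrans _ hM) (hmin' _) hgM' h0 with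
      h | hU
    · exact h
    have hcard : (insert 0 (M'.erase g)).card = M.card := by
      rw [Finset.card_insert_of_notMem (fun h => h0 (Finset.mem_of_mem_erase h)),
        Finset.card_erase_add_one hgM', Finset.card_vadd_finset]
    have hne : -((d + 1) • g) ≠ g := by
      intro h
      apply hd
      rw [neg_eq_iff_eq_neg] at h
      rw [succ_nsmul, h, neg_add_cancel]
    refine ih hU (hcard ▸ hmin) (Finset.mem_insert_of_mem (Finset.mem_erase.2 ⟨hne, hyM'⟩))
      ?_ fun h => h0 (by rwa [h, neg_zero] at hyM')
    rw [neg_add_cancel]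
    exact Finset.mem_insert_self _ _

theorem exists_mem_minimal_zero_mem (g : G) (hg : ∀ x : G, ∃ d : ℕ, d • g = x)
    (htwo : ∀ S, P S → 2 ≤ S.card) {S₀ : Finset G} (hS₀ : P S₀) :
    ∃ S, g ∈ S ∧ Minimal (fun T => P T ∧ 0 ∈ T) S := by
  let M := Function.argminOn Finset.card {S | P S} ⟨S₀, hS₀⟩
  have hM : P M := Function.argminOn_mem _ _ _
  have hmin (T : Finset G) (hT : P T) : M.card ≤ T.card := Function.argminOn_le _ _ hT
  obtain ⟨x, hx, y, hy, hxy⟩ := Finset.one_lt_card.1 (htwo M hM)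
  obtain ⟨_ | d, hd⟩ := hg (x - y)
  · exact absurd (sub_eq_zero.1 (by simpa using hd.symm)) hxy
  · exact exists_mem_minimal_of_add_nsmul_mem hmono htrans g d hM hmin hy
      (by rwa [hd, add_sub_cancel]) (hd ▸ sub_ne_zero.2 hxy)

end Translation

section Weight

variable {n : ℕ} {k : (ZMod n)ˣ}

def coveringWeights (n : ℕ) (k : (ZMod n)ˣ) {r : ℕ} (i : Fin r → ℕ) : Set ℕ :=
  { s | ∃ lam : Fin r → ℕ, OmegaSet n k i lam = Set.univ ∧ ∑ j, lam j = s }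

theorem wtSeq_eq_sInf_coveringWeights {r : ℕ} (i : Fin r → ℕ) :
    wtSeq n k i = sInf (coveringWeights n k i) := rfl

theorem coveringWeights_subset_of_range_subset {q r : ℕ} {i₀ : Fin q → ℕ} {i₁ : Fin r → ℕ}
    (h₀ : Function.Injective i₀) (h : Set.range i₀ ⊆ Set.range i₁) :
    coveringWeights n k i₀ ⊆ coveringWeights n k i₁ := by
  choose f hf using fun j => h ⟨j, rfl⟩
  have hinj : Function.Injective f := fun a b hab => h₀ (by rw [← hf a, ← hf b, hab])
  rintro s ⟨lam, hΩ, rfl⟩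
  refine ⟨Function.extend f lam 0, Set.eq_univ_of_forall fun x => ?_, ?_⟩
  · obtain ⟨b, hb, rfl⟩ := hΩ ▸ Set.mem_univ x
    refine ⟨Function.extend f b 0, fun m => ?_, ?_⟩
    · by_cases hm : m ∈ Set.range f
      · obtain ⟨j, rfl⟩ := hm
        simpa [hinj.extend_apply] using hb j
      · simp [Function.extend_apply' _ _ _ hm]
    · exact Fintype.sum_of_injective f hinj _ _
        (fun m hm => by simp [Function.extend_apply' _ _ _ hm]) fun j => by
          rw [hinj.extend_apply, hf]
  · exact (Fintype.sum_of_injective f hinj lam (Function.extend f lam 0)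
      (fun m hm => Function.extend_apply' _ _ _ hm) fun j => (hinj.extend_apply _ _ _).symm).symm

theorem wtSeq_le_of_range_subset {q r : ℕ} {i₀ : Fin q → ℕ} {i₁ : Fin r → ℕ}
    (h₀ : Function.Injective i₀) (h : Set.range i₀ ⊆ Set.range i₁)
    (hne : (coveringWeights n k i₀).Nonempty) : wtSeq n k i₁ ≤ wtSeq n k i₀ :=
  Nat.sInf_le (coveringWeights_subset_of_range_subset h₀ h (Nat.sInf_mem hne))

theorem wtSeq_eq_of_range_eq {q r : ℕ} {i₀ : Fin q → ℕ} {i₁ : Fin r → ℕ}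
    (h₀ : Function.Injective i₀) (h₁ : Function.Injective i₁)
    (h : Set.range i₀ = Set.range i₁) : wtSeq n k i₀ = wtSeq n k i₁ := by
  rw [wtSeq_eq_sInf_coveringWeights, wtSeq_eq_sInf_coveringWeights,
    (coveringWeights_subset_of_range_subset h₀ h.le).antisymm
      (coveringWeights_subset_of_range_subset h₁ h.ge)]

theorem omegaSet_eq_image_mul_of_pow_eq_mul {r : ℕ} {i₀ i₁ : Fin r → ℕ} (u : (ZMod n)ˣ)
    (h : ∀ j, k ^ i₁ j = k ^ i₀ j * u) (lam : Fin r → ℕ) :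
    OmegaSet n k i₁ lam = (· * (u : ZMod n)) '' OmegaSet n k i₀ lam := by
  ext x
  simp only [OmegaSet, h, Units.val_mul, ← mul_assoc, ← Finset.sum_mul, Set.mem_ofPred_eq,
    Set.mem_image]
  constructor
  · rintro ⟨b, hb, rfl⟩
    exact ⟨_, ⟨b, hb, rfl⟩, rfl⟩
  · rintro ⟨_, ⟨b, hb, rfl⟩, rfl⟩
    exact ⟨b, hb, rfl⟩

theorem wtSeq_eq_of_pow_eq_mul {r : ℕ} {i₀ i₁ : Fin r → ℕ} (u : (ZMod n)ˣ)
    (h : ∀ j, k ^ i₁ j = k ^ i₀ j * u) : wtSeq n k i₁ = wtSeq n k i₀ := by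
  have hinj : Function.Injective (Set.image (· * (u : ZMod n))) :=
    Set.image_injective.2 (Units.mulRight u).injective
  have huniv : (· * (u : ZMod n)) '' Set.univ = Set.univ :=
    Set.image_univ_of_surjective (Units.mulRight u).surjective
  have hcover (lam : Fin r → ℕ) :
      OmegaSet n k i₁ lam = Set.univ ↔ OmegaSet n k i₀ lam = Set.univ := by
    rw [omegaSet_eq_image_mul_of_pow_eq_mul u h]
    conv_lhs => rw [← huniv]
    exact hinj.eq_iff
  simp only [wtSeq, hcover]

theorem coveringWeights_nonempty [NeZero n] {r : ℕ} (i : Fin r → ℕ) (j₀ : Fin r) :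
    (coveringWeights n k i).Nonempty := by
  refine ⟨_, fun _ => n, Set.eq_univ_of_forall fun x => ?_, rfl⟩
  let u := k ^ i j₀
  let v : ZMod n := x * ↑u⁻¹
  refine ⟨Pi.single j₀ (v.val : ℤ), fun j => ?_, ?_⟩
  · rcases eq_or_ne j j₀ with rfl | hj
    · rw [Pi.single_eq_same, Nat.abs_cast]
      exact_mod_cast (ZMod.val_lt v).le
    · simp [hj]
  · rw [Fintype.sum_eq_single j₀ fun j hj => by simp [hj], Pi.single_eq_same, Int.cast_natCast,
      ZMod.natCast_zmod_val, mul_assoc, Units.inv_mul, mul_one]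

theorem le_prod_of_omegaSet_eq_univ [NeZero n] {r : ℕ} {i lam : Fin r → ℕ}
    (h : OmegaSet n k i lam = Set.univ) : n ≤ ∏ j, (2 * lam j + 1) := by
  let box := Fintype.piFinset fun j => Finset.Icc (-(lam j : ℤ)) (lam j)
  have hsurj : Set.SurjOn
      (fun b : Fin r → ℤ => ∑ j, (b j : ZMod n) * ((k ^ i j : (ZMod n)ˣ) : ZMod n))
      box (Finset.univ : Finset (ZMod n)) := by
    intro x _
    obtain ⟨b, hb, rfl⟩ := h ▸ Set.mem_univ x
    exact ⟨b, Fintype.mem_piFinset.2 fun j => Finset.mem_Icc.2 (abs_le.1 (hb j)), rfl⟩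
  calc n = (Finset.univ : Finset (ZMod n)).card := (ZMod.card n).symm
    _ ≤ box.card := Finset.card_le_card_of_surjOn _ hsurj
    _ = ∏ j, (2 * lam j + 1) := by
      rw [Fintype.card_piFinset]
      exact Finset.prod_congr rfl fun j _ => by rw [Int.card_Icc]; omega

theorem wtSeq_ne_zero (hn : 2 ≤ n) {r : ℕ} (i : Fin r → ℕ) (j₀ : Fin r) : wtSeq n k i ≠ 0 := by
  have : NeZero n := ⟨by omega⟩
  obtain ⟨lam, hΩ, hsum⟩ := Nat.sInf_mem (coveringWeights_nonempty (k := k) i j₀)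
  intro h0
  have hlam : ∀ j, lam j = 0 := fun j =>
    Finset.sum_eq_zero_iff.1 (hsum.trans h0) j (Finset.mem_univ j)
  have hle := le_prod_of_omegaSet_eq_univ hΩ
  simp only [hlam, mul_zero, zero_add, Finset.prod_const_one] at hle
  omega

theorem two_le_of_wtSeq_lt {r : ℕ} {i : Fin r → ℕ} (hwt : wtSeq n k i < n / 2)
    (h0 : wtSeq n k i ≠ 0) : 2 ≤ r := by
  have : NeZero n := ⟨by omega⟩
  obtain ⟨lam, hΩ, hsum⟩ := Nat.sInf_mem (Nat.nonempty_of_pos_sInf (Nat.pos_of_ne_zero h0))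
  have hle := le_prod_of_omegaSet_eq_univ hΩ
  change ∑ j, lam j = wtSeq n k i at hsum
  by_contra! hr
  obtain _ | _ | r := r
  · simp at hle; omega
  · simp at hle hsum; omega
  · omega

end Weight

def antitoneEnum (S : Finset ℕ) : Fin S.card → ℕ := fun j => S.orderEmbOfFin rfl j.rev

theorem antitoneEnum_strictAnti (S : Finset ℕ) : StrictAnti (antitoneEnum S) :=
  fun _ _ h => (S.orderEmbOfFin rfl).strictMono (Fin.rev_lt_rev.2 h)

theorem range_antitoneEnum (S : Finset ℕ) : Set.range (antitoneEnum S) = S := by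
  change Set.range (S.orderEmbOfFin rfl ∘ Fin.revPerm) = S
  rw [Fin.revPerm.surjective.range_comp, Finset.range_orderEmbOfFin]

section DegreeCodegree

variable {r : ℕ} {i : Fin r → ℕ}

theorem degSeq_le_of_isSeq {α : ℕ} (hi : IsSeq α i) (hne : (Set.range i).Nonempty) :
    degSeq i ≤ α - 1 :=
  csSup_le hne (Set.forall_mem_range.2 hi.1)

theorem le_degSeq_of_mem {x : ℕ} (hx : x ∈ Set.range i) : x ≤ degSeq i :=
  le_csSup (Set.finite_range i).bddAbove hx

theorem codegSeq_le_of_mem {x : ℕ} (hx : x ∈ Set.range i) (hx0 : x ≠ 0) : codegSeq i ≤ x :=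
  Nat.sInf_le ⟨hx, hx0⟩

theorem codegSeq_ne_zero_of_two_le (hi : StrictAnti i) (hr : 2 ≤ r) : codegSeq i ≠ 0 := by
  have hlt : i ⟨1, hr⟩ < i ⟨0, by omega⟩ := hi (Fin.mk_lt_mk.2 zero_lt_one)
  have hmem : i ⟨0, by omega⟩ ∈ {v | v ∈ Set.range i ∧ v ≠ 0} := ⟨⟨_, rfl⟩, by omega⟩
  exact (Nat.sInf_mem ⟨_, hmem⟩).2

end DegreeCodegree

section Realizing

variable {n : ℕ} {k : (ZMod n)ˣ} {α : ℕ}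

/-- A finset of exponents modulo `α`, read as the decreasing sequence of its representatives
in `[0, α)`. -/
def RealizesWtAlpha (n : ℕ) (k : (ZMod n)ˣ) (α : ℕ) (A : Finset (ZMod α)) : Prop :=
  wtSeq n k (antitoneEnum (A.image ZMod.val)) = wtAlpha n k α

variable [NeZero α]

theorem realizesWtAlpha_image_iff {r : ℕ} {e : Fin r → ZMod α} (he : Function.Injective e) :
    RealizesWtAlpha n k α (Finset.univ.image e) ↔
      wtSeq n k (ZMod.val ∘ e) = wtAlpha n k α := by
  rw [RealizesWtAlpha, wtSeq_eq_of_range_eq (antitoneEnum_strictAnti _).injective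
    ((ZMod.val_injective α).comp he)]
  rw [range_antitoneEnum, Set.range_comp]
  simp

theorem realizesWtAlpha_image_natCast_iff {r : ℕ} {i : Fin r → ℕ} (hi : Function.Injective i)
    (hlt : ∀ j, i j < α) :
    RealizesWtAlpha n k α (Finset.univ.image fun j => (i j : ZMod α)) ↔
      wtSeq n k i = wtAlpha n k α := by
  have hval : ZMod.val ∘ (fun j => (i j : ZMod α)) = i :=
    funext fun j => ZMod.val_cast_of_lt (hlt j)
  rw [realizesWtAlpha_image_iff (.of_comp (hval ▸ hi)), hval]

theorem realizesWtAlpha_univ : RealizesWtAlpha n k α Finset.univ := by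
  have hinj : Function.Injective (DeltaSeq α) := fun a b h => by
    simp only [DeltaSeq] at h; omega
  have hlt (j : Fin α) : DeltaSeq α j < α := by simp only [DeltaSeq]; omega
  have huniv : (Finset.univ.image fun j => (DeltaSeq α j : ZMod α)) = Finset.univ := by
    refine Finset.eq_univ_of_card _ ?_
    rw [Finset.card_image_of_injective _ ?_, Finset.card_univ, Fintype.card_fin, ZMod.card]
    exact fun a b h => hinj (by simpa [ZMod.val_cast_of_lt (hlt _)] using congrArg ZMod.val h)
  rw [← huniv, realizesWtAlpha_image_natCast_iff hinj hlt]
  rfl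

theorem RealizesWtAlpha.vadd (hα : orderOf k = α) (c : ZMod α) {A : Finset (ZMod α)}
    (hA : RealizesWtAlpha n k α A) : RealizesWtAlpha n k α (c +ᵥ A) := by
  let e : Fin A.card → ZMod α := fun j => A.equivFin.symm j
  have he : Function.Injective e := Subtype.val_injective.comp A.equivFin.symm.injective
  have himage : Finset.univ.image e = A := by
    ext x
    simp only [Finset.mem_image, Finset.mem_univ, true_and, e]
    exact ⟨fun ⟨j, hj⟩ => hj ▸ (A.equivFin.symm j).2,
      fun hx => ⟨A.equivFin ⟨x, hx⟩, by simp⟩⟩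
  have hvadd : Finset.univ.image ((c + ·) ∘ e) = c +ᵥ A := by
    rw [← Finset.image_image, himage]
    rfl
  rw [← himage, realizesWtAlpha_image_iff he] at hA
  rw [← hvadd, realizesWtAlpha_image_iff ((add_right_injective c).comp he), ← hA]
  have hpow (m : ℕ) : k ^ (m % α) = k ^ m := hα ▸ pow_mod_orderOf k m
  refine wtSeq_eq_of_pow_eq_mul (k ^ c.val) fun j => ?_
  simp only [Function.comp_apply, ZMod.val_add, hpow, ← pow_add, add_comm]

theorem RealizesWtAlpha.mono (hwt0 : wtAlpha n k α ≠ 0) {A B : Finset (ZMod α)}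
    (hA : RealizesWtAlpha n k α A) (hAB : A ⊆ B) : RealizesWtAlpha n k α B := by
  have hrange {S T : Finset (ZMod α)} (h : S ⊆ T) :
      Set.range (antitoneEnum (S.image ZMod.val)) ⊆
        Set.range (antitoneEnum (T.image ZMod.val)) := by
    simpa only [range_antitoneEnum, Finset.coe_subset] using Finset.image_subset_image h
  have hneA : (coveringWeights n k (antitoneEnum (A.image ZMod.val))).Nonempty :=
    Nat.nonempty_of_pos_sInf (Nat.pos_of_ne_zero (Eq.trans_ne hA hwt0))
  have hneB := hneA.mono
    (coveringWeights_subset_of_range_subset (antitoneEnum_strictAnti _).injective (hrange hAB))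
  have hBA := wtSeq_le_of_range_subset (antitoneEnum_strictAnti _).injective (hrange hAB) hneA
  have hUB := wtSeq_le_of_range_subset (antitoneEnum_strictAnti _).injective
    (hrange (Finset.subset_univ B)) hneB
  rw [realizesWtAlpha_univ] at hUB
  exact le_antisymm (hA ▸ hBA) hUB

theorem RealizesWtAlpha.two_le_card (hwt : wtAlpha n k α < n / 2) (hwt0 : wtAlpha n k α ≠ 0)
    {A : Finset (ZMod α)} (hA : RealizesWtAlpha n k α A) : 2 ≤ A.card := by
  have := two_le_of_wtSeq_lt (hA ▸ hwt) (hA ▸ hwt0)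
  rwa [Finset.card_image_of_injective _ (ZMod.val_injective α)] at this

theorem isMinimalPrimeSeq_of_minimal {A : Finset (ZMod α)}
    (hA : Minimal (fun T => RealizesWtAlpha n k α T ∧ 0 ∈ T) A) :
    IsMinimalPrimeSeq n k α (antitoneEnum (A.image ZMod.val)) := by
  have hlt {x : ℕ} (hx : x ∈ Set.range (antitoneEnum (A.image ZMod.val))) : x < α := by
    rw [range_antitoneEnum, Finset.coe_image] at hx
    obtain ⟨a, -, rfl⟩ := hx
    exact ZMod.val_lt a
  refine ⟨⟨fun j => Nat.le_sub_one_of_lt (hlt ⟨j, rfl⟩), antitoneEnum_strictAnti _⟩, ?_,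
    hA.1.1, fun q i₀ hi₀ h0 hsub hne hwt => hne ?_⟩
  · rw [range_antitoneEnum, Finset.coe_image]
    exact ⟨0, hA.1.2, ZMod.val_zero⟩
  have hi₀lt (j : Fin q) : i₀ j < α := hlt (hsub ⟨j, rfl⟩)
  let T : Finset (ZMod α) := Finset.univ.image fun j => (i₀ j : ZMod α)
  have hT : RealizesWtAlpha n k α T :=
    (realizesWtAlpha_image_natCast_iff hi₀.2.injective hi₀lt).2 hwt
  have hTA : T ⊆ A := by
    intro x hx
    obtain ⟨j, -, rfl⟩ := Finset.mem_image.1 hx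
    have hj := hsub ⟨j, rfl⟩
    rw [range_antitoneEnum, Finset.mem_coe, Finset.mem_image] at hj
    obtain ⟨a, ha, haj⟩ := hj
    rwa [← haj, ZMod.natCast_zmod_val]
  have h0T : (0 : ZMod α) ∈ T := by
    obtain ⟨j, hj⟩ := h0
    exact Finset.mem_image.2 ⟨j, Finset.mem_univ j, by rw [hj, Nat.cast_zero]⟩
  rw [← hA.eq_of_le ⟨hT, h0T⟩ hTA, range_antitoneEnum]
  ext x
  simp [T, ZMod.val_cast_of_lt (hi₀lt _)]

end Realizing

section Extremal

variable {n : ℕ} {k : (ZMod n)ˣ} {α : ℕ}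

theorem wtAlpha_ne_zero (hα : orderOf k = α) (hwt : wtAlpha n k α < n / 2) :
    wtAlpha n k α ≠ 0 := by
  have : NeZero n := ⟨by omega⟩
  exact wtSeq_ne_zero (by omega) _ ⟨0, hα ▸ orderOf_pos k⟩

theorem exists_isMinimalPrimeSeq_val_mem_range (hα : orderOf k = α)
    (hwt : wtAlpha n k α < n / 2) (g : (ZMod α)ˣ) :
    ∃ (r : ℕ) (i : Fin r → ℕ), IsMinimalPrimeSeq n k α i ∧ (g : ZMod α).val ∈ Set.range i := by
  have : NeZero n := ⟨by omega⟩
  have : NeZero α := ⟨hα ▸ (orderOf_pos k).ne'⟩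
  have hwt0 := wtAlpha_ne_zero hα hwt
  have hg (x : ZMod α) : ∃ d : ℕ, d • (g : ZMod α) = x :=
    ⟨(x * ↑g⁻¹).val, by
      rw [nsmul_eq_mul, ZMod.natCast_zmod_val, mul_assoc, Units.inv_mul, mul_one]⟩
  obtain ⟨A, hgA, hA⟩ := exists_mem_minimal_zero_mem (P := RealizesWtAlpha n k α)
    (fun _ _ hS hST => hS.mono hwt0 hST) (fun c _ hS => hS.vadd hα c) (g : ZMod α) hg
    (fun _ hS => hS.two_le_card hwt hwt0) realizesWtAlpha_univ
  refine ⟨_, _, isMinimalPrimeSeq_of_minimal hA, ?_⟩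
  rw [range_antitoneEnum, Finset.coe_image]
  exact Set.mem_image_of_mem _ hgA

end Extremal

theorem deg_add_codeg_eq_of_max_deg_min_codeg_general (n : ℕ)
    (k : (ZMod n)ˣ) (α : ℕ) (hα : orderOf k = α)
    (hwt : wtAlpha n k α < n / 2)
    (r : ℕ) (i : Fin r → ℕ) (hi : IsMinimalPrimeSeq n k α i)
    (hmax : ∀ (q : ℕ) (i'' : Fin q → ℕ), IsMinimalPrimeSeq n k α i'' →
      degSeq i'' ≤ degSeq i)
    (s : ℕ) (i' : Fin s → ℕ) (hi' : IsMinimalPrimeSeq n k α i')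
    (hmin : ∀ (q : ℕ) (i'' : Fin q → ℕ), IsMinimalPrimeSeq n k α i'' →
      codegSeq i' ≤ codegSeq i'') :
    degSeq i + codegSeq i' = α := by
  have hwt0 := wtAlpha_ne_zero hα hwt
  have hα2 : 2 ≤ α := two_le_of_wtSeq_lt hwt hwt0
  have : Fact (1 < α) := ⟨hα2⟩
  obtain ⟨_, i₁, hi₁, htop⟩ := exists_isMinimalPrimeSeq_val_mem_range hα hwt (-1)
  obtain ⟨_, i₂, hi₂, hone⟩ := exists_isMinimalPrimeSeq_val_mem_range hα hwt 1
  rw [Units.val_neg, Units.val_one, ZMod.neg_val, if_neg one_ne_zero, ZMod.val_one] at htop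
  rw [Units.val_one, ZMod.val_one] at hone
  have hdeg : degSeq i = α - 1 :=
    (degSeq_le_of_isSeq hi.1 ⟨0, hi.2.1⟩).antisymm
      ((le_degSeq_of_mem htop).trans (hmax _ _ hi₁))
  have hs : 2 ≤ s := two_le_of_wtSeq_lt (hi'.2.2.1 ▸ hwt) (hi'.2.2.1 ▸ hwt0)
  have hcodeg : codegSeq i' = 1 :=
    ((hmin _ _ hi₂).trans (codegSeq_le_of_mem hone one_ne_zero)).antisymm
      (Nat.one_le_iff_ne_zero.2 (codegSeq_ne_zero_of_two_le hi'.1.2 hs))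
  omega

/-- If `i` is a minimal prime sequence realizing `wt(n,k;α)` of largest degree
and `i′` is a minimal prime sequence realizing `wt(n,k;α)` of smallest
codegree, then `deg(i) + codeg(i′) = α`. -/
theorem deg_add_codeg_eq_of_max_deg_min_codeg (n : ℕ) (hn : 3 ≤ n)
    (k : (ZMod n)ˣ) (α : ℕ) (hα : orderOf k = α) (hα2 : 2 ≤ α)
    (hwt : wtAlpha n k α < n / 2)
    (r : ℕ) (i : Fin r → ℕ) (hi : IsMinimalPrimeSeq n k α i)
    (hmax : ∀ (q : ℕ) (i'' : Fin q → ℕ), IsMinimalPrimeSeq n k α i'' →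
      degSeq i'' ≤ degSeq i)
    (s : ℕ) (i' : Fin s → ℕ) (hi' : IsMinimalPrimeSeq n k α i')
    (hmin : ∀ (q : ℕ) (i'' : Fin q → ℕ), IsMinimalPrimeSeq n k α i'' →
      codegSeq i' ≤ codegSeq i'') :
    degSeq i + codegSeq i' = α :=
  deg_add_codeg_eq_of_max_deg_min_codeg_general n k α hα hwt r i hi hmax s i' hi' hmin
end

section
/- Let n ≥ 3 and let k be a unit modulo n of multiplicative order α ≥ 2, and assume wt(n,k;α) < ⌊n/2⌋ (so every minimal prime sequence realizing wt(n,k;α) has length at least 2, and hence has a well-defined positive degree and codegree). Let i be a minimal prime sequence realizing wt(n,k;α) whose degree is smallest among all minimal prime sequences realizing wt(n,k;α), and let i′ be a minimal prime sequence realizing wt(n,k;α) whose codegree is largest among all such sequences. Then deg(i) + codeg(i′) = α. -/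
/-!
Multiplication by the unit `k ^ m` maps `Ω(i, λ)` onto the set obtained by adding `m` to every
exponent modulo `α = ord k`, so such rotations preserve weights; weights also depend only on the
set of exponents. Rotating a minimal prime sequence until one of its entries becomes `0` therefore
gives a reduced sequence of weight `wt(n,k;α)`, inside which a minimal prime sequence can be found.
Rotating `i` by `α - deg i` sends its top entry to `0` and every other entry `e` to
`e + α - deg i`, so the minimal prime sequence found has codegree at least `α - deg i`; rotating
`i'` by `α - codeg i'` moves every entry to at most `α - codeg i'`, bounding the degree of the
one found. Maximality of `codeg i'` and minimality of `deg i` give the two inequalities.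
Codegrees make sense because covering `ℤ/nℤ` with the exponent `0` alone costs `⌊n/2⌋`, so a
minimal prime sequence of weight below `⌊n/2⌋` has a nonzero entry.
-/

open Function Set

section Weight

variable {n : ℕ} {k : (ZMod n)ˣ} {r s : ℕ}

lemma omegaSet_comp_equiv (i lam : Fin r → ℕ) (e : Fin s ≃ Fin r) :
    OmegaSet n k (i ∘ e) (lam ∘ e) = OmegaSet n k i lam := by
  ext x
  constructor
  · rintro ⟨b, hb, rfl⟩
    refine ⟨b ∘ e.symm, fun j => by simpa using hb (e.symm j), ?_⟩
    simpa using e.sum_comp fun j => (b (e.symm j) : ZMod n) * ((k ^ i j : (ZMod n)ˣ) : ZMod n)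
  · rintro ⟨b, hb, rfl⟩
    exact ⟨b ∘ e, fun j => hb (e j),
      (e.sum_comp fun j => (b j : ZMod n) * ((k ^ i j : (ZMod n)ˣ) : ZMod n)).symm⟩

lemma wtSeq_comp_equiv (i : Fin r → ℕ) (e : Fin s ≃ Fin r) :
    wtSeq n k (i ∘ e) = wtSeq n k i := by
  unfold wtSeq
  congr 1
  ext w
  constructor
  · rintro ⟨lam, hΩ, rfl⟩
    refine ⟨lam ∘ e.symm, ?_, e.symm.sum_comp lam⟩
    rwa [← omegaSet_comp_equiv i _ e, Function.comp_assoc, e.symm_comp_self, Function.comp_id]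
  · rintro ⟨lam, hΩ, rfl⟩
    exact ⟨lam ∘ e, by rw [omegaSet_comp_equiv, hΩ], e.sum_comp lam⟩

lemma wtSeq_eq_of_range_eq_s4 {i : Fin r → ℕ} {i' : Fin s → ℕ} (hi : Injective i)
    (hi' : Injective i') (h : range i' = range i) : wtSeq n k i' = wtSeq n k i := by
  let e : Fin s ≃ Fin r :=
    (Equiv.ofInjective i' hi').trans ((Equiv.setCongr h).trans (Equiv.ofInjective i hi).symm)
  have hie : i ∘ e = i' := funext fun j => Equiv.apply_ofInjective_symm hi _
  rw [← hie, wtSeq_comp_equiv]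

lemma wtSeq_congr {i i' : Fin r → ℕ}
    (h : ∀ lam, OmegaSet n k i lam = univ ↔ OmegaSet n k i' lam = univ) :
    wtSeq n k i = wtSeq n k i' := by
  simp only [wtSeq, h]

lemma omegaSet_rotate (i lam : Fin r → ℕ) (m : ℕ) :
    OmegaSet n k (fun j => (i j + m) % orderOf k) lam =
      Units.mulRight (k ^ m) '' OmegaSet n k i lam := by
  have hsum : ∀ b : Fin r → ℤ,
      ∑ j, (b j : ZMod n) * ((k ^ ((i j + m) % orderOf k) : (ZMod n)ˣ) : ZMod n) =
        (∑ j, (b j : ZMod n) * ((k ^ i j : (ZMod n)ˣ) : ZMod n)) *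
          ((k ^ m : (ZMod n)ˣ) : ZMod n) := by
    intro b
    simp only [pow_mod_orderOf, pow_add, Units.val_mul, Finset.sum_mul, mul_assoc]
  ext x
  constructor
  · rintro ⟨b, hb, rfl⟩
    exact ⟨_, ⟨b, hb, rfl⟩, (hsum b).symm⟩
  · rintro ⟨_, ⟨b, hb, rfl⟩, rfl⟩
    exact ⟨b, hb, (hsum b).symm⟩

lemma wtSeq_rotate (i : Fin r → ℕ) (m : ℕ) :
    wtSeq n k (fun j => (i j + m) % orderOf k) = wtSeq n k i := by
  refine wtSeq_congr fun lam => ?_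
  have := image_eq_image (s := OmegaSet n k i lam) (t := univ) (Units.mulRight (k ^ m)).injective
  rwa [image_univ_of_surjective (Units.mulRight (k ^ m)).surjective, ← omegaSet_rotate] at this

lemma le_two_mul_add_one_of_omegaSet_zero_eq_univ [NeZero n] {lam : Fin 1 → ℕ}
    (h : OmegaSet n k (fun _ => 0) lam = univ) : n ≤ 2 * lam 0 + 1 := by
  have hsub : (Finset.univ : Finset (ZMod n)) ⊆
      (Finset.Icc (-(lam 0 : ℤ)) (lam 0)).image ((↑) : ℤ → ZMod n) := by
    intro x _
    obtain ⟨b, hb, rfl⟩ : x ∈ OmegaSet n k (fun _ => 0) lam := h ▸ mem_univ x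
    exact Finset.mem_image.mpr ⟨b 0, Finset.mem_Icc.mpr (abs_le.mp (hb 0)), by simp⟩
  have hcard := (Finset.card_le_card hsub).trans Finset.card_image_le
  rw [Finset.card_univ, ZMod.card, Int.card_Icc] at hcard
  omega

lemma half_le_wtSeq_zero : n / 2 ≤ wtSeq n k (fun _ : Fin 1 => 0) := by
  rcases Nat.eq_zero_or_pos n with rfl | hn
  · simp
  have : NeZero n := ⟨hn.ne'⟩
  have hcover : OmegaSet n k (fun _ : Fin 1 => 0) (fun _ => n) = univ := by
    refine eq_univ_of_forall fun x => ⟨fun _ => (x.val : ℤ), fun _ => ?_, by simp⟩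
    rw [abs_of_nonneg (Int.natCast_nonneg _)]
    exact_mod_cast (ZMod.val_lt x).le
  obtain ⟨lam, hΩ, hsum⟩ := Nat.sInf_mem (s := {s | ∃ lam : Fin 1 → ℕ,
    OmegaSet n k (fun _ => 0) lam = univ ∧ ∑ j, lam j = s}) ⟨n, fun _ => n, hcover, by simp⟩
  have := le_two_mul_add_one_of_omegaSet_zero_eq_univ hΩ
  rw [Fin.sum_univ_one] at hsum
  rw [wtSeq, ← hsum]
  omega

lemma exists_ne_zero_of_wtSeq_lt {i : Fin r → ℕ} (hi : Injective i) (h0 : 0 ∈ range i)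
    (hwt : wtSeq n k i < n / 2) : ∃ j, i j ≠ 0 := by
  by_contra! h
  have hr : range i = range fun _ : Fin 1 => 0 := by
    ext v
    exact ⟨by rintro ⟨j, rfl⟩; exact ⟨0, (h j).symm⟩, by rintro ⟨_, rfl⟩; exact h0⟩
  rw [wtSeq_eq_of_range_eq_s4 (fun _ _ _ => Subsingleton.elim _ _) hi hr] at hwt
  exact hwt.not_ge half_le_wtSeq_zero

end Weight

noncomputable def descSeq (S : Finset ℕ) : Fin S.card → ℕ :=
  fun j => S.orderEmbOfFin rfl j.rev

lemma descSeq_strictAnti (S : Finset ℕ) : StrictAnti (descSeq S) :=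
  (S.orderEmbOfFin rfl).strictMono.comp_strictAnti Fin.rev_strictAnti

lemma range_descSeq (S : Finset ℕ) : range (descSeq S) = S :=
  (Fin.rev_surjective.range_comp _).trans (S.range_orderEmbOfFin rfl)

section MinimalPrime

variable {n : ℕ} {k : (ZMod n)ˣ} {α r : ℕ}

lemma wtSeq_descSeq_image {f : Fin r → ℕ} (hf : Injective f) :
    wtSeq n k (descSeq (Finset.univ.image f)) = wtSeq n k f :=
  wtSeq_eq_of_range_eq_s4 hf (descSeq_strictAnti _).injective (by simp [range_descSeq])

lemma exists_isMinimalPrimeSeq_descSeq_subset {T : Finset ℕ} (hT0 : 0 ∈ T)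
    (hTα : ∀ e ∈ T, e ≤ α - 1) (hwt : wtSeq n k (descSeq T) = wtAlpha n k α) :
    ∃ U ⊆ T, IsMinimalPrimeSeq n k α (descSeq U) := by
  let good := T.powerset.filter fun U => 0 ∈ U ∧ wtSeq n k (descSeq U) = wtAlpha n k α
  obtain ⟨U, hUgood, hUmin⟩ :=
    Finset.exists_minimal (s := good) ⟨T, by simp [good, hT0, hwt]⟩
  obtain ⟨hUT, hU0, hUwt⟩ : U ⊆ T ∧ 0 ∈ U ∧ wtSeq n k (descSeq U) = wtAlpha n k α := by
    simpa [good] using hUgood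
  refine ⟨U, hUT, ⟨fun j => hTα _ (hUT ?_), descSeq_strictAnti U⟩, ?_, hUwt, ?_⟩
  · simpa [range_descSeq] using mem_range_self (f := descSeq U) j
  · simpa [range_descSeq] using hU0
  intro q i₀ hi₀ h0 hsub hne hwt₀
  have hi₀U : Finset.univ.image i₀ ⊆ U := by
    simpa [← Finset.coe_subset, range_descSeq] using hsub
  refine hne (le_antisymm hsub ?_)
  have hUi₀ := hUmin (y := Finset.univ.image i₀) ?_ hi₀U
  · simpa [← Finset.coe_subset, range_descSeq] using hUi₀
  simpa [good, hi₀U.trans hUT, wtSeq_descSeq_image hi₀.2.injective, hwt₀] using h0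

end MinimalPrime

section DegCodeg

variable {r : ℕ} {i : Fin r → ℕ}

lemma le_degSeq (i : Fin r → ℕ) (j : Fin r) : i j ≤ degSeq i :=
  le_csSup (finite_range i).bddAbove (mem_range_self j)

lemma degSeq_le {b : ℕ} (h : ∀ j, i j ≤ b) : degSeq i ≤ b :=
  csSup_le' (by rintro _ ⟨j, rfl⟩; exact h j)

lemma degSeq_mem (h : (range i).Nonempty) : degSeq i ∈ range i :=
  Nat.sSup_mem h (finite_range i).bddAbove

lemma codegSeq_le {j : Fin r} (h : i j ≠ 0) : codegSeq i ≤ i j :=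
  Nat.sInf_le ⟨mem_range_self j, h⟩

lemma codegSeq_mem {j : Fin r} (h : i j ≠ 0) : codegSeq i ∈ range i ∧ codegSeq i ≠ 0 :=
  Nat.sInf_mem (s := {v | v ∈ range i ∧ v ≠ 0}) ⟨i j, mem_range_self j, h⟩

end DegCodeg

namespace IsMinimalPrimeSeq

variable {n : ℕ} {k : (ZMod n)ˣ} {α r : ℕ} {i : Fin r → ℕ}

lemma exists_ne_zero (hi : IsMinimalPrimeSeq n k α i) (hwt : wtAlpha n k α < n / 2) :
    ∃ j, i j ≠ 0 :=
  exists_ne_zero_of_wtSeq_lt hi.1.2.injective hi.2.1 (hi.2.2.1 ▸ hwt)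

lemma pos (hi : IsMinimalPrimeSeq n k α i) (hwt : wtAlpha n k α < n / 2) : 0 < α := by
  obtain ⟨j, hj⟩ := hi.exists_ne_zero hwt
  have := hi.1.1 j
  omega

lemma exists_range_subset_rotate (hα : orderOf k = α) (hwt : wtAlpha n k α < n / 2)
    (hi : IsMinimalPrimeSeq n k α i) {m : ℕ} (h0 : ∃ j, (i j + m) % α = 0) :
    ∃ (q : ℕ) (i₀ : Fin q → ℕ), IsMinimalPrimeSeq n k α i₀ ∧
      range i₀ ⊆ range fun j => (i j + m) % α := by
  have hα0 := hi.pos hwt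
  let f : Fin r → ℕ := fun j => (i j + m) % α
  have hf : Injective f := fun a b hab => by
    have hmod : i a % α = i b % α := Nat.ModEq.add_right_cancel' m hab
    have ha := hi.1.1 a
    have hb := hi.1.1 b
    rw [Nat.mod_eq_of_lt (by omega), Nat.mod_eq_of_lt (by omega)] at hmod
    exact hi.1.2.injective hmod
  obtain ⟨U, hU, hUmin⟩ := exists_isMinimalPrimeSeq_descSeq_subset (k := k) (α := α)
    (T := Finset.univ.image f) (by simpa [f] using h0)
    (fun e he => by
      obtain ⟨j, -, rfl⟩ := Finset.mem_image.mp he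
      have := Nat.mod_lt (i j + m) hα0
      simp only [f]
      omega)
    (by rw [wtSeq_descSeq_image hf, ← hi.2.2.1, ← wtSeq_rotate i m, hα])
  refine ⟨_, _, hUmin, fun x hx => ?_⟩
  rw [range_descSeq] at hx
  simpa [f] using hU hx

lemma exists_le_degSeq_add_codegSeq (hα : orderOf k = α) (hwt : wtAlpha n k α < n / 2)
    (hi : IsMinimalPrimeSeq n k α i) :
    ∃ (q : ℕ) (i₀ : Fin q → ℕ), IsMinimalPrimeSeq n k α i₀ ∧
      α ≤ degSeq i + codegSeq i₀ := by
  obtain ⟨jd, hjd⟩ := degSeq_mem ⟨0, hi.2.1⟩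
  have hdα := hi.1.1 jd
  have hα0 := hi.pos hwt
  obtain ⟨q, i₀, hi₀, hsub⟩ := hi.exists_range_subset_rotate hα hwt (m := α - degSeq i)
    ⟨jd, by rw [hjd, Nat.add_sub_cancel' (by omega), Nat.mod_self]⟩
  obtain ⟨j₀, hj₀⟩ := hi₀.exists_ne_zero hwt
  obtain ⟨hc, hc0⟩ := codegSeq_mem hj₀
  obtain ⟨j, hj⟩ := hsub hc
  dsimp only at hj
  refine ⟨q, i₀, hi₀, ?_⟩
  rcases (le_degSeq i j).lt_or_eq with hlt | heq
  · rw [Nat.mod_eq_of_lt (by omega)] at hj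
    omega
  · rw [heq, Nat.add_sub_cancel' (by omega), Nat.mod_self] at hj
    exact absurd hj.symm hc0

lemma exists_degSeq_add_codegSeq_le (hα : orderOf k = α) (hwt : wtAlpha n k α < n / 2)
    (hi : IsMinimalPrimeSeq n k α i) :
    ∃ (q : ℕ) (i₀ : Fin q → ℕ), IsMinimalPrimeSeq n k α i₀ ∧
      degSeq i₀ + codegSeq i ≤ α := by
  obtain ⟨j₀, hj₀⟩ := hi.exists_ne_zero hwt
  obtain ⟨⟨jc, hjc⟩, hc0⟩ := codegSeq_mem hj₀
  have hcα := hi.1.1 jc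
  obtain ⟨q, i₀, hi₀, hsub⟩ := hi.exists_range_subset_rotate hα hwt (m := α - codegSeq i)
    ⟨jc, by rw [hjc, Nat.add_sub_cancel' (by omega), Nat.mod_self]⟩
  have hbound : ∀ j, (i j + (α - codegSeq i)) % α ≤ α - codegSeq i := by
    intro j
    have hjα := hi.1.1 j
    by_cases hj0 : i j = 0
    · rw [hj0, zero_add, Nat.mod_eq_of_lt (by omega)]
    · have hcj := codegSeq_le hj0
      rw [show i j + (α - codegSeq i) = i j - codegSeq i + α by omega, Nat.add_mod_right,
        Nat.mod_eq_of_lt (by omega)]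
      omega
  have hdeg : degSeq i₀ ≤ α - codegSeq i := degSeq_le fun j' => by
    obtain ⟨j, hj⟩ := hsub (mem_range_self j')
    rw [← hj]
    exact hbound j
  exact ⟨q, i₀, hi₀, by omega⟩

end IsMinimalPrimeSeq

theorem deg_add_codeg_eq_of_min_deg_max_codeg_general (n : ℕ)
    (k : (ZMod n)ˣ) (α : ℕ) (hα : orderOf k = α)
    (hwt : wtAlpha n k α < n / 2)
    (r : ℕ) (i : Fin r → ℕ) (hi : IsMinimalPrimeSeq n k α i)
    (hmin : ∀ (q : ℕ) (i'' : Fin q → ℕ), IsMinimalPrimeSeq n k α i'' →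
      degSeq i ≤ degSeq i'')
    (s : ℕ) (i' : Fin s → ℕ) (hi' : IsMinimalPrimeSeq n k α i')
    (hmax : ∀ (q : ℕ) (i'' : Fin q → ℕ), IsMinimalPrimeSeq n k α i'' →
      codegSeq i'' ≤ codegSeq i') :
    degSeq i + codegSeq i' = α := by
  obtain ⟨_, i₁, hi₁, hle⟩ := hi.exists_le_degSeq_add_codegSeq hα hwt
  obtain ⟨_, i₂, hi₂, hge⟩ := hi'.exists_degSeq_add_codegSeq_le hα hwt
  have := hmax _ _ hi₁
  have := hmin _ _ hi₂
  omega

/-- If `i` is a minimal prime sequence realizing `wt(n,k;α)` of smallest degree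
and `i′` is a minimal prime sequence realizing `wt(n,k;α)` of largest
codegree, then `deg(i) + codeg(i′) = α`. -/
theorem deg_add_codeg_eq_of_min_deg_max_codeg (n : ℕ) (hn : 3 ≤ n)
    (k : (ZMod n)ˣ) (α : ℕ) (hα : orderOf k = α) (hα2 : 2 ≤ α)
    (hwt : wtAlpha n k α < n / 2)
    (r : ℕ) (i : Fin r → ℕ) (hi : IsMinimalPrimeSeq n k α i)
    (hmin : ∀ (q : ℕ) (i'' : Fin q → ℕ), IsMinimalPrimeSeq n k α i'' →
      degSeq i ≤ degSeq i'')
    (s : ℕ) (i' : Fin s → ℕ) (hi' : IsMinimalPrimeSeq n k α i')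
    (hmax : ∀ (q : ℕ) (i'' : Fin q → ℕ), IsMinimalPrimeSeq n k α i'' →
      codegSeq i'' ≤ codegSeq i') :
    degSeq i + codegSeq i' = α :=
  deg_add_codeg_eq_of_min_deg_max_codeg_general n k α hα hwt r i hi hmin s i' hi' hmax
end

section
/- Let p be an odd prime with p ≡ 3 (mod 4) and let k be a unit modulo p of multiplicative order p−1 (a primitive root mod p). Then wt(p, k; p−1) ≤ (p+5)/4. Moreover, there exists a sequence i with deg(i) = (p−3)/4 and wt(p, k; i) ≤ (p+5)/4. -/
open Finset Pointwise

section SignedSum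

variable {R : Type*} [Ring R]

def IsSignedSum (A : Finset R) (x : R) : Prop :=
  ∃ c : R → ℤ, (∀ a, |c a| ≤ 1) ∧ x = ∑ a ∈ A, (c a : R) * a

variable {A : Finset R}

lemma isSignedSum_zero : IsSignedSum A 0 :=
  ⟨0, by simp⟩

variable [DecidableEq R]

lemma exists_sign_mul_of_mem_union_neg {y : R} (hy : y ∈ A ∪ -A) :
    ∃ a ∈ A, ∃ ε : ℤ, |ε| = 1 ∧ y = ε * a := by
  rcases mem_union.1 hy with hy | hy
  · exact ⟨y, hy, 1, by simp⟩
  · exact ⟨-y, mem_neg'.1 hy, -1, by simp⟩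

lemma isSignedSum_of_mem_union_neg {y : R} (hy : y ∈ A ∪ -A) : IsSignedSum A y := by
  obtain ⟨a, ha, ε, hε, rfl⟩ := exists_sign_mul_of_mem_union_neg hy
  refine ⟨Pi.single a ε, fun z => ?_, ?_⟩
  · rcases eq_or_ne z a with rfl | hz <;> simp [*]
  · rw [sum_eq_single_of_mem a ha (fun z _ hz => by simp [hz])]
    simp

lemma isSignedSum_add {y z : R} (hy : y ∈ A ∪ -A) (hz : z ∈ A ∪ -A)
    (hzy : z ≠ y) (hzy' : z ≠ -y) : IsSignedSum A (y + z) := by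
  obtain ⟨a, ha, ε, hε, rfl⟩ := exists_sign_mul_of_mem_union_neg hy
  obtain ⟨b, hb, ε', hε', rfl⟩ := exists_sign_mul_of_mem_union_neg hz
  have hab : a ≠ b := by
    rintro rfl
    rcases abs_eq_abs.1 (hε'.trans hε.symm) with rfl | rfl
    · exact hzy rfl
    · exact hzy' (by simp)
  refine ⟨Pi.single a ε + Pi.single b ε', fun w => ?_, ?_⟩
  · rcases eq_or_ne w a with rfl | hwa
    · simp [hab, hε]
    · rcases eq_or_ne w b with rfl | hwb <;> simp [*]
  · simp only [Pi.add_apply, Int.cast_add, add_mul, sum_add_distrib]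
    rw [sum_eq_single_of_mem a ha (fun w _ hw => by simp [hw]),
      sum_eq_single_of_mem b hb (fun w _ hw => by simp [hw])]
    simp

end SignedSum

theorem isSignedSum_of_disjoint_neg {F : Type*} [Field F] [Fintype F] [DecidableEq F]
    (h2 : (2 : F) ≠ 0) {A : Finset F} (hA : Disjoint A (-A))
    (hcard : Fintype.card F + 1 ≤ 4 * #A) (x : F) : IsSignedSum A x := by
  by_cases hx0 : x = 0
  · exact hx0 ▸ isSignedSum_zero
  set S := A ∪ -A
  by_cases hxS : x ∈ S
  · exact isSignedSum_of_mem_union_neg hxS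
  have h0A : (0 : F) ∉ A := fun h => disjoint_left.1 hA h (by simpa [mem_neg'] using h)
  have h0S : (0 : F) ∉ S := by simp [S, mem_neg', h0A]
  set T := S.image (x - ·)
  have hST : S ∪ T ⊆ univ.erase 0 := by
    intro y hy
    rcases mem_union.1 hy with hy | hy
    · exact mem_erase.2 ⟨fun h => h0S (h ▸ hy), mem_univ y⟩
    · obtain ⟨z, hz, rfl⟩ := mem_image.1 hy
      exact mem_erase.2 ⟨fun h => hxS (sub_eq_zero.1 h ▸ hz), mem_univ _⟩
  have hcardS : #S = 2 * #A := by
    rw [card_union_of_disjoint hA, card_neg, two_mul]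
  have hcardT : #T = #S := card_image_of_injective _ sub_right_injective
  have hinter : 1 < #(S ∩ T) := by
    have := card_union_add_card_inter S T
    have := card_le_card hST
    rw [card_erase_of_mem (mem_univ 0), card_univ] at this
    omega
  -- of two distinct points of `S ∩ T`, at most one is `x / 2`
  obtain ⟨y, hy, hyx⟩ : ∃ y ∈ S ∩ T, x - y ≠ y := by
    obtain ⟨y₁, hy₁, y₂, hy₂, hne⟩ := one_lt_card.1 hinter
    by_contra! h
    refine hne (mul_left_cancel₀ h2 ?_)
    linear_combination h y₂ hy₂ - h y₁ hy₁
  obtain ⟨hyS, hyT⟩ := mem_inter.1 hy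
  have hxyS : x - y ∈ S := by
    obtain ⟨z, hz, rfl⟩ := mem_image.1 hyT
    simpa using hz
  simpa using isSignedSum_add hyS hxyS hyx (fun h => hx0 (by linear_combination h))

lemma val_pow_ne_neg_val_pow {R : Type*} [CommRing R] [IsDomain R] (h2 : (2 : R) ≠ 0)
    (u : Rˣ) {a b : ℕ} (ha : 2 * a < orderOf u) (hb : 2 * b < orderOf u) :
    ((u ^ a : Rˣ) : R) ≠ -((u ^ b : Rˣ) : R) := by
  intro h
  have hsq : u ^ (2 * a) = u ^ (2 * b) := Units.ext <| by
    rw [pow_mul', pow_mul', Units.val_pow_eq_pow_val (u ^ a), Units.val_pow_eq_pow_val (u ^ b), h,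
      neg_sq]
  obtain rfl : a = b := by
    have := pow_injOn_Iio_orderOf ha hb hsq
    omega
  exact mul_ne_zero h2 (Units.ne_zero _) (by linear_combination h)

lemma exists_signed_sum_pow_eq {p t : ℕ} [Fact p.Prime] (hpt : p = 4 * t + 3)
    {k : (ZMod p)ˣ} (hk : orderOf k = p - 1) (x : ZMod p) :
    ∃ c : ℕ → ℤ, (∀ m, |c m| ≤ 1) ∧
      x = ∑ m ∈ range (t + 1), (c m : ZMod p) * ((k ^ m : (ZMod p)ˣ) : ZMod p) := by
  have h2 : (2 : ZMod p) ≠ 0 := by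
    intro h
    have := Nat.le_of_dvd two_pos ((ZMod.natCast_eq_zero_iff 2 p).1 (by exact_mod_cast h))
    omega
  set g : ℕ → ZMod p := fun m => ((k ^ m : (ZMod p)ˣ) : ZMod p)
  have hg : Set.InjOn g (range (t + 1)) := fun a ha b hb h => by
    simp only [coe_range, Set.mem_Iio] at ha hb
    exact pow_injOn_Iio_orderOf (x := k) (by rw [Set.mem_Iio]; omega) (by rw [Set.mem_Iio]; omega)
      (Units.ext h)
  have hA : Disjoint ((range (t + 1)).image g) (-(range (t + 1)).image g) := by
    refine disjoint_left.2 fun y hy hy' => ?_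
    obtain ⟨a, ha, rfl⟩ := mem_image.1 hy
    obtain ⟨b, hb, hb'⟩ := mem_image.1 (mem_neg'.1 hy')
    simp only [mem_range] at ha hb
    exact val_pow_ne_neg_val_pow h2 k (a := b) (b := a) (by omega) (by omega) hb'
  obtain ⟨c, hc, hx⟩ := isSignedSum_of_disjoint_neg h2 hA
    (by rw [ZMod.card, card_image_of_injOn hg, card_range]; omega) x
  exact ⟨fun m => c (g m), fun m => hc _, by rwa [sum_image hg] at hx⟩

lemma wtSeq_le_of_forall_eq_signed_sum {n t r : ℕ} {k : (ZMod n)ˣ} {i : Fin r → ℕ}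
    (hi : Function.Injective i) (hcov : ∀ m ≤ t, m ∈ Set.range i)
    (hk : ∀ x : ZMod n, ∃ c : ℕ → ℤ, (∀ m, |c m| ≤ 1) ∧
      x = ∑ m ∈ range (t + 1), (c m : ZMod n) * ((k ^ m : (ZMod n)ˣ) : ZMod n)) :
    wtSeq n k i ≤ t + 1 := by
  classical
  set J := univ.filter (fun j => i j ≤ t)
  have hJ : J.image i = range (t + 1) := by
    ext m
    simp only [J, mem_image, mem_filter, mem_univ, true_and, mem_range]
    constructor
    · rintro ⟨j, hj, rfl⟩
      omega
    · intro hm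
      obtain ⟨j, rfl⟩ := hcov m (by omega)
      exact ⟨j, by omega, rfl⟩
  refine Nat.sInf_le ⟨fun j => if i j ≤ t then 1 else 0, Set.eq_univ_of_forall fun x => ?_, ?_⟩
  · obtain ⟨c, hc, rfl⟩ := hk x
    refine ⟨fun j => if i j ≤ t then c (i j) else 0, fun j => ?_, ?_⟩
    · by_cases h : i j ≤ t <;> simp [h, hc]
    · rw [← hJ, sum_image hi.injOn, sum_filter]
      refine sum_congr rfl fun j _ => ?_
      by_cases h : i j ≤ t <;> simp [h]
  · rw [sum_boole, Nat.cast_id, ← card_image_of_injective J hi, hJ, card_range]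

lemma deltaSeq_strictAnti (α : ℕ) : StrictAnti (DeltaSeq α) := fun a b h => by
  have := b.isLt
  simp only [DeltaSeq, Fin.lt_def] at h ⊢
  omega

lemma mem_range_deltaSeq {α m : ℕ} (hm : m < α) : m ∈ Set.range (DeltaSeq α) :=
  ⟨⟨α - 1 - m, by omega⟩, by simp only [DeltaSeq]; omega⟩

lemma isSeq_deltaSeq {α β : ℕ} (h : β ≤ α) : IsSeq α (DeltaSeq β) :=
  ⟨fun j => by simp only [DeltaSeq]; omega, deltaSeq_strictAnti β⟩

lemma degSeq_deltaSeq_succ (β : ℕ) : degSeq (DeltaSeq (β + 1)) = β :=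
  IsGreatest.csSup_eq ⟨⟨0, by simp [DeltaSeq]⟩, by rintro _ ⟨j, rfl⟩; simp only [DeltaSeq]; omega⟩

/-- If `p ≡ 3 (mod 4)` is an odd prime and `k` is a primitive root mod `p`,
then `wt(p, k; p−1) ≤ (p+5)/4`, and moreover there is a sequence `i` of degree
`(p−3)/4` with `wt(p, k; i) ≤ (p+5)/4`. -/
theorem wt_prime_three_mod_four (p : ℕ) (hp : p.Prime) (hp3 : p % 4 = 3)
    (k : (ZMod p)ˣ) (hk : orderOf k = p - 1) :
    wtAlpha p k (p - 1) ≤ (p + 5) / 4 ∧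
    ∃ (r : ℕ) (i : Fin r → ℕ), 0 < r ∧ IsSeq (p - 1) i ∧
      degSeq i = (p - 3) / 4 ∧ wtSeq p k i ≤ (p + 5) / 4 := by
  have := Fact.mk hp
  obtain ⟨t, hpt⟩ : ∃ t, p = 4 * t + 3 := ⟨p / 4, by omega⟩
  have hwt : ∀ β, t < β → wtSeq p k (DeltaSeq β) ≤ t + 1 := fun β hβ =>
    wtSeq_le_of_forall_eq_signed_sum (deltaSeq_strictAnti β).injective
      (fun m hm => mem_range_deltaSeq (by omega)) (exists_signed_sum_pow_eq hpt hk)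
  refine ⟨(hwt (p - 1) (by omega)).trans (by omega), t + 1, DeltaSeq (t + 1), t.succ_pos,
    isSeq_deltaSeq (by omega), ?_, (hwt (t + 1) (by omega)).trans (by omega)⟩
  rw [degSeq_deltaSeq_succ]
  omega
end
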